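/- For real q > 0, with ρ(u) = (-qu + √(q²u² + 8))/4 and f(u) = ρ(1)/ρ(u), one has f''(1) + f'(1) - (f'(1))² = 8q/(8 + q²)^(3/2), and in particular this quantity is strictly positive. -/

import Mathlib

/-!
Writing `s(u) = √(q²u² + b)`, the identity `(s(u) - qu)(s(u) + qu) = b` turns `1/ρ(u)` into the
affine-plus-square-root function `4(qu + s(u))/b`, so `f = ρ(1)/ρ` is differentiated directly:
`f' = (4ρ(1)/b)(q + q²u/s)` and `f'' = (4ρ(1)/b) · bq²/s³`. With `S = s(1)` and `ρ(1) = (S - q)/4`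
this gives `f'(1) = q/S` and `f''(1) = q²(S - q)/S³`, and the variance constant collapses to
`q(S² - q²)/S³ = bq/S³`. The paper's case is `b = 8`.
-/

open Real

namespace Avoiding231

noncomputable def rho (q b u : ℝ) : ℝ := (-q * u + √(q ^ 2 * u ^ 2 + b)) / 4

variable {b : ℝ} (q : ℝ)

theorem rho_mul_add_sqrt (hb : 0 ≤ b) (u : ℝ) :
    rho q b u * (q * u + √(q ^ 2 * u ^ 2 + b)) = b / 4 := by
  have hs : √(q ^ 2 * u ^ 2 + b) ^ 2 = q ^ 2 * u ^ 2 + b := sq_sqrt (by positivity)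
  unfold rho
  linear_combination hs / 4

theorem div_rho (hb : 0 < b) (c u : ℝ) :
    c / rho q b u = 4 * c / b * (q * u + √(q ^ 2 * u ^ 2 + b)) := by
  have h := rho_mul_add_sqrt q hb.le u
  have hρ : rho q b u ≠ 0 := by
    rintro h0
    rw [h0, zero_mul] at h
    linarith
  field_simp
  linear_combination (-4 * c) * h

theorem hasDerivAt_sqrt_sq_mul_sq_add (hb : 0 < b) (u : ℝ) :
    HasDerivAt (fun u => √(q ^ 2 * u ^ 2 + b)) (q ^ 2 * u / √(q ^ 2 * u ^ 2 + b)) u := by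
  have hpos : 0 < q ^ 2 * u ^ 2 + b := by positivity
  convert ((hasDerivAt_pow 2 u).const_mul (q ^ 2) |>.add_const b).sqrt hpos.ne' using 1
  field_simp
  ring

theorem hasDerivAt_mul_div_sqrt_sq_mul_sq_add (hb : 0 < b) (u : ℝ) :
    HasDerivAt (fun u => q ^ 2 * u / √(q ^ 2 * u ^ 2 + b))
      (b * q ^ 2 / √(q ^ 2 * u ^ 2 + b) ^ 3) u := by
  have hpos : 0 < q ^ 2 * u ^ 2 + b := by positivity
  have hs : √(q ^ 2 * u ^ 2 + b) ^ 2 = q ^ 2 * u ^ 2 + b := sq_sqrt hpos.le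
  have hs0 : √(q ^ 2 * u ^ 2 + b) ≠ 0 := (sqrt_pos.2 hpos).ne'
  refine ((hasDerivAt_id' u).const_mul (q ^ 2)).fun_div
    (hasDerivAt_sqrt_sq_mul_sq_add q hb u) hs0 |>.congr_deriv ?_
  field_simp
  linear_combination q ^ 2 * hs

theorem deriv_div_rho (hb : 0 < b) (c : ℝ) :
    deriv (fun u => c / rho q b u) =
      fun u => 4 * c / b * (q + q ^ 2 * u / √(q ^ 2 * u ^ 2 + b)) := by
  simp_rw [div_rho q hb]
  funext u
  have h := (((hasDerivAt_id u).const_mul q).add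
    (hasDerivAt_sqrt_sq_mul_sq_add q hb u)).const_mul (4 * c / b)
  simp only [id, mul_one] at h
  exact h.deriv

theorem deriv_deriv_div_rho (hb : 0 < b) (c u : ℝ) :
    deriv (deriv fun u => c / rho q b u) u =
      4 * c / b * (b * q ^ 2 / √(q ^ 2 * u ^ 2 + b) ^ 3) := by
  rw [deriv_div_rho q hb]
  have h := ((hasDerivAt_const u q).add
    (hasDerivAt_mul_div_sqrt_sq_mul_sq_add q hb u)).const_mul (4 * c / b)
  rw [zero_add] at h
  exact h.deriv

theorem variance_constant_eq (hb : 0 < b) :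
    let f : ℝ → ℝ := fun u => rho q b 1 / rho q b u
    deriv (deriv f) 1 + deriv f 1 - (deriv f 1) ^ 2 = b * q / (b + q ^ 2) ^ ((3 : ℝ) / 2) := by
  intro f
  have hpos : 0 < q ^ 2 + b := by positivity
  set S := √(q ^ 2 + b) with hS
  have hS2 : S ^ 2 = q ^ 2 + b := sq_sqrt hpos.le
  have hS0 : S ≠ 0 := (sqrt_pos.2 hpos).ne'
  have hrpow : (b + q ^ 2) ^ ((3 : ℝ) / 2) = S ^ 3 := by
    rw [add_comm, show (3 : ℝ) / 2 = 1 / 2 * 3 by norm_num, rpow_mul hpos.le, ← sqrt_eq_rpow,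
      rpow_ofNat]
  have hρ1 : rho q b 1 = (S - q) / 4 := by
    simp only [rho, one_pow, mul_one, ← hS]
    ring
  have hf' : deriv f 1 = q / S := by
    rw [deriv_div_rho q hb, hρ1]
    simp only [one_pow, mul_one, ← hS]
    field_simp
    linear_combination q * hS2
  have hf'' : deriv (deriv f) 1 = q ^ 2 * (S - q) / S ^ 3 := by
    rw [deriv_deriv_div_rho q hb, hρ1]
    simp only [one_pow, mul_one, ← hS]
    field_simp
  rw [hf', hf'', hrpow]
  field_simp
  linear_combination q * hS2

end Avoiding231

theorem variance_constant_231 (q : ℝ) (hq : 0 < q) :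
    let f : ℝ → ℝ := fun u =>
      ((-q * 1 + Real.sqrt (q ^ 2 * 1 ^ 2 + 8)) / 4)
        / ((-q * u + Real.sqrt (q ^ 2 * u ^ 2 + 8)) / 4)
    deriv (deriv f) 1 + deriv f 1 - (deriv f 1) ^ 2 = 8 * q / (8 + q ^ 2) ^ ((3 : ℝ) / 2)
    ∧ 0 < 8 * q / (8 + q ^ 2) ^ ((3 : ℝ) / 2) :=
  ⟨Avoiding231.variance_constant_eq q (by norm_num), by positivity⟩
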